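/- arXiv:1707.03281 — 2 statements merged into one kernel-verified Lean document; each statement's English description precedes it below -/
import Mathlib

section
/- Let X be a topological additive group, I an ideal on ω, and x, y sequences in X such that the sequence (x_n − y_n) is I*-convergent to 0. Then x and y have the same I-limit points: Λ_x(I) = Λ_y(I). -/
open Filter Topology

/-- An ideal on ω: closed under subsets and finite unions, contains all singletons,
and is not the whole power set. -/
def IsIdeal (I : Set (Set ℕ)) : Prop :=
  (∀ ⦃A B : Set ℕ⦄, A ∈ I → B ⊆ A → B ∈ I) ∧
  (∀ ⦃A B : Set ℕ⦄, A ∈ I → B ∈ I → A ∪ B ∈ I) ∧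
  (∀ n : ℕ, ({n} : Set ℕ) ∈ I) ∧ (Set.univ : Set ℕ) ∉ I

/-- A P-ideal. -/
def IsPIdeal (I : Set (Set ℕ)) : Prop :=
  IsIdeal I ∧ ∀ A : ℕ → Set ℕ, (∀ n, A n ∈ I) → ∃ B ∈ I, ∀ n, (A n \ B).Finite

/-- A G-ideal. -/
def IsGIdeal (I : Set (Set ℕ)) : Prop :=
  IsIdeal I ∧ ∀ a : ℕ → ℕ, StrictMono a → (Set.range a)ᶜ ∈ I →
    ∀ B : Set ℕ, ((a '' B)ᶜ ∈ I ↔ Bᶜ ∈ I)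

variable {X : Type*} [TopologicalSpace X]

/-- `I`-convergence of a sequence to a point. -/
def IConv (I : Set (Set ℕ)) (x : ℕ → X) (l : X) : Prop :=
  ∀ U ∈ 𝓝 l, {n | x n ∉ U} ∈ I

/-- `I*`-convergence: some subsequence indexed by a set of the dual filter converges. -/
def IStarConv (I : Set (Set ℕ)) (x : ℕ → X) (l : X) : Prop :=
  ∃ e : ℕ → ℕ, StrictMono e ∧ (Set.range e)ᶜ ∈ I ∧ Tendsto (x ∘ e) atTop (𝓝 l)

/-- The set of `I`-cluster points of a sequence. -/
def IClusterPts (I : Set (Set ℕ)) (x : ℕ → X) : Set X :=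
  {l | ∀ U ∈ 𝓝 l, {n | x n ∈ U} ∉ I}

/-- The set of `I`-limit points of a sequence. -/
def ILimitPts (I : Set (Set ℕ)) (x : ℕ → X) : Set X :=
  {l | ∃ e : ℕ → ℕ, StrictMono e ∧ Set.range e ∉ I ∧ Tendsto (x ∘ e) atTop (𝓝 l)}

/-!
A subsequence along a strictly increasing `e : ℕ → ℕ` converges exactly when the sequence
converges along the filter `atTop ⊓ 𝓟 (range e)`, so an `I`-limit point of `x` is a limit of `x`
along some `S ∉ I`. If `x - y → 0` along `A` with `Aᶜ ∈ I`, then `S ∩ A ∉ I`, and along `S ∩ A`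
the sequence `y = -(x - y) + x` tends to the same limit.
-/

namespace IsIdeal

variable {I : Set (Set ℕ)}

theorem mem_of_finite (hI : IsIdeal I) {S : Set ℕ} (hS : S.Finite) : S ∈ I := by
  obtain ⟨subset_mem, union_mem, singleton_mem, -⟩ := hI
  refine hS.induction_on _ (subset_mem (singleton_mem 0) (Set.empty_subset _)) ?_
  intro n T _ _ hT
  rw [Set.insert_eq]
  exact union_mem (singleton_mem n) hT

theorem infinite_of_notMem (hI : IsIdeal I) {S : Set ℕ} (hS : S ∉ I) : S.Infinite :=
  fun hfin => hS (hI.mem_of_finite hfin)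

theorem inter_notMem (hI : IsIdeal I) {S A : Set ℕ} (hS : S ∉ I) (hA : Aᶜ ∈ I) :
    S ∩ A ∉ I := fun hSA =>
  hS <| hI.1 (hI.2.1 hSA hA) fun n hn => (em (n ∈ A)).imp (fun h => ⟨hn, h⟩) id

end IsIdeal

theorem StrictMono.map_atTop_eq {e : ℕ → ℕ} (he : StrictMono e) :
    map e atTop = atTop ⊓ 𝓟 (Set.range e) := by
  refine le_antisymm (le_inf he.tendsto_atTop (by simp)) fun s hs => ?_
  obtain ⟨N, hN⟩ := mem_atTop_sets.mp (mem_map.mp hs)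
  refine mem_inf_of_inter (Ici_mem_atTop (e N)) (mem_principal_self _) ?_
  rintro _ ⟨hle, m, rfl⟩
  exact hN m (he.le_iff_le.mp hle)

theorem StrictMono.tendsto_comp_iff {Y : Type*} {e : ℕ → ℕ} (he : StrictMono e) {x : ℕ → Y}
    {f : Filter Y} :
    Tendsto (x ∘ e) atTop f ↔ Tendsto x (atTop ⊓ 𝓟 (Set.range e)) f := by
  rw [← he.map_atTop_eq, tendsto_map'_iff]

theorem mem_ILimitPts_iff {I : Set (Set ℕ)} (hI : IsIdeal I) {x : ℕ → X} {l : X} :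
    l ∈ ILimitPts I x ↔ ∃ S ∉ I, Tendsto x (atTop ⊓ 𝓟 S) (𝓝 l) := by
  constructor
  · rintro ⟨e, he, heI, hx⟩
    exact ⟨_, heI, he.tendsto_comp_iff.mp hx⟩
  · rintro ⟨S, hS, hx⟩
    have hinf : (Set.ofPred (· ∈ S)).Infinite := hI.infinite_of_notMem hS
    have hmono := Nat.nth_strictMono hinf
    refine ⟨_, hmono, ?_, hmono.tendsto_comp_iff.mpr ?_⟩ <;> rwa [Nat.range_nth_of_infinite hinf]

theorem IStarConv.exists_tendsto {I : Set (Set ℕ)} {x : ℕ → X} {l : X}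
    (h : IStarConv I x l) : ∃ A, Aᶜ ∈ I ∧ Tendsto x (atTop ⊓ 𝓟 A) (𝓝 l) :=
  let ⟨_, he, heI, hx⟩ := h
  ⟨_, heI, he.tendsto_comp_iff.mp hx⟩

theorem ILimitPts_subset_of_tendsto_sub {G : Type*} [AddGroup G] [TopologicalSpace G]
    [IsTopologicalAddGroup G] {I : Set (Set ℕ)} (hI : IsIdeal I) {x y : ℕ → G} {A : Set ℕ}
    (hA : Aᶜ ∈ I) (h : Tendsto (fun n => x n - y n) (atTop ⊓ 𝓟 A) (𝓝 0)) :
    ILimitPts I x ⊆ ILimitPts I y := by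
  intro l hl
  obtain ⟨S, hS, hx⟩ := (mem_ILimitPts_iff hI).mp hl
  refine (mem_ILimitPts_iff hI).mpr ⟨S ∩ A, hI.inter_notMem hS hA, ?_⟩
  have hxS := hx.mono_left (inf_le_inf_left _ (principal_mono.2 (Set.inter_subset_left (t := A))))
  have hxyA := h.mono_left (inf_le_inf_left _ (principal_mono.2 (Set.inter_subset_right (s := S))))
  have hy := hxyA.neg.add hxS
  rw [neg_zero, zero_add] at hy
  exact hy.congr fun n => by rw [neg_sub, sub_add_cancel]

theorem stmt16 {X : Type*} [AddGroup X] [TopologicalSpace X] [IsTopologicalAddGroup X]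
    {I : Set (Set ℕ)} (hI : IsIdeal I) {x y : ℕ → X}
    (h : IStarConv I (fun n => x n - y n) 0) :
    ILimitPts I x = ILimitPts I y := by
  obtain ⟨A, hA, hxy⟩ := h.exists_tendsto
  have hyx : Tendsto (fun n => y n - x n) (atTop ⊓ 𝓟 A) (𝓝 0) := by simpa using hxy.neg
  exact (ILimitPts_subset_of_tendsto_sub hI hA hxy).antisymm
    (ILimitPts_subset_of_tendsto_sub hI hA hyx)
end

section
/- Let (X, τ) be a first countable topological space and I an ideal on ω. Then a set F ⊆ X is τ-closed if and only if F = ⋃_{x ∈ F^ω} Γ_x(I); that is, τ = τ(I). -/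
open Filter Topology

variable {X : Type*} [TopologicalSpace X]

/- Both inclusions of `F = ⋃ₓ Γₓ(I)` against `closure F`: an `I`-cluster point of a sequence in `F`
has points of `F` in each of its neighbourhoods, as `∅ ∈ I`; conversely, by first countability each
point of `closure F` is the limit of a sequence in `F`, and a limit is an `I`-cluster point because
the ideal `I` contains every finite set but not `ℕ`, so it contains no cofinite set. -/

namespace IsIdeal

variable {I : Set (Set ℕ)}

lemma empty_mem (hI : IsIdeal I) : ∅ ∈ I :=
  hI.1 (hI.2.2.1 0) (Set.empty_subset _)

lemma finite_mem (hI : IsIdeal I) {A : Set ℕ} (hA : A.Finite) : A ∈ I := by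
  induction A, hA using Set.Finite.induction_on with
  | empty => exact hI.empty_mem
  | insert _ _ ih => exact Set.insert_eq _ _ ▸ hI.2.1 (hI.2.2.1 _) ih

lemma notMem_of_mem_cofinite (hI : IsIdeal I) {A : Set ℕ} (hA : A ∈ cofinite) : A ∉ I := by
  intro hAI
  apply hI.2.2.2
  rw [← Set.union_compl_self A]
  exact hI.2.1 hAI (hI.finite_mem (mem_cofinite.1 hA))

end IsIdeal

section ClusterPoints

variable {I : Set (Set ℕ)} {x : ℕ → X} {l : X}

lemma mem_closure_of_mem_iClusterPts (hempty : ∅ ∈ I) {F : Set X} (hxF : ∀ n, x n ∈ F)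
    (hl : l ∈ IClusterPts I x) : l ∈ closure F := by
  refine mem_closure_iff.2 fun U hU hlU => ?_
  obtain ⟨n, hn⟩ := Set.nonempty_iff_ne_empty.2 fun h : {n | x n ∈ U} = ∅ =>
    hl U (hU.mem_nhds hlU) (h ▸ hempty)
  exact ⟨x n, hn, hxF n⟩

lemma mem_iClusterPts_of_tendsto (hI : IsIdeal I) (hx : Tendsto x atTop (𝓝 l)) :
    l ∈ IClusterPts I x := fun _ hU =>
  hI.notMem_of_mem_cofinite (Nat.cofinite_eq_atTop ▸ hx hU)

lemma setOf_mem_iClusterPts_eq_closure [FrechetUrysohnSpace X] (hI : IsIdeal I) (F : Set X) :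
    {l | ∃ x : ℕ → X, (∀ n, x n ∈ F) ∧ l ∈ IClusterPts I x} = closure F := by
  ext l
  constructor
  · rintro ⟨x, hxF, hl⟩
    exact mem_closure_of_mem_iClusterPts hI.empty_mem hxF hl
  · intro hl
    obtain ⟨x, hxF, hx⟩ := mem_closure_iff_seq_limit.1 hl
    exact ⟨x, hxF, mem_iClusterPts_of_tendsto hI hx⟩

end ClusterPoints

theorem stmt18 {X : Type*} [TopologicalSpace X]
    [FirstCountableTopology X] {I : Set (Set ℕ)} (hI : IsIdeal I)
    (F : Set X) :
    IsClosed F ↔ F = {l | ∃ x : ℕ → X, (∀ n, x n ∈ F) ∧ l ∈ IClusterPts I x} := by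
  rw [setOf_mem_iClusterPts_eq_closure hI, eq_comm]
  exact closure_eq_iff_isClosed.symm
end
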